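/- For every real τ ≥ 0, the double integral ∫_0^∞ ( ∫_{x₂}^∞ (1/2) · exp(−x₁/2) dx₁ ) · (1/2) · exp(−(x₂+τ)/2) · ( ∑_{k=0}^∞ ( (τ·x₂/4)^k / (k!)² ) ) dx₂ equals (1/2) · exp(−τ/4). -/

import Mathlib

/-!
The inner integral is `exp (-x₂ / 2)`, so the integrand becomes
`(1/2) e^{-τ/2} (∑ (τ/4)^k x₂^k / (k!)²) e^{-x₂}`. The series converges absolutely after
integration, so it may be integrated term by term; since `∫₀^∞ x^k e^{-x} dx = k!`, this
leaves
`(1/2) e^{-τ/2} ∑ (τ/4)^k / k! = (1/2) e^{-τ/2} e^{τ/4}`.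
-/

open Real MeasureTheory Set
open scoped Nat

lemma integral_half_mul_exp_neg_half_Ioi (a : ℝ) :
    ∫ x in Ioi a, (1 / 2) * exp (-x / 2) = exp (-a / 2) := by
  have h := integral_exp_mul_Ioi (a := -(1 / 2)) (by norm_num) a
  simp only [neg_mul, one_div_mul_eq_div] at h
  simp only [integral_const_mul, neg_div, h]
  ring

lemma integrableOn_pow_mul_exp_neg_Ioi (k : ℕ) :
    IntegrableOn (fun x : ℝ ↦ x ^ k * exp (-x)) (Ioi 0) := by
  refine (GammaIntegral_convergent (s := k + 1) (by positivity)).congr_fun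
    (fun x _ ↦ ?_) measurableSet_Ioi
  simp [mul_comm]

lemma integral_pow_mul_exp_neg_Ioi (k : ℕ) :
    ∫ x in Ioi (0 : ℝ), x ^ k * exp (-x) = k ! := by
  rw [← Gamma_nat_eq_factorial, Gamma_eq_integral (by positivity)]
  refine setIntegral_congr_fun measurableSet_Ioi (fun x _ ↦ ?_)
  simp [mul_comm]

lemma integral_tsum_mul_pow_mul_exp_neg_Ioi (a : ℕ → ℝ)
    (ha : Summable fun k ↦ |a k| * k !) :
    ∫ x in Ioi (0 : ℝ), (∑' k, a k * x ^ k) * exp (-x) = ∑' k, a k * k ! := by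
  have h_int (k : ℕ) :
      Integrable (fun x ↦ a k * (x ^ k * exp (-x))) (volume.restrict (Ioi 0)) :=
    (integrableOn_pow_mul_exp_neg_Ioi k).const_mul (a k)
  have h_norm (k : ℕ) :
      ∫ x in Ioi (0 : ℝ), ‖a k * (x ^ k * exp (-x))‖ = |a k| * k ! := by
    rw [← integral_pow_mul_exp_neg_Ioi, ← integral_const_mul]
    refine setIntegral_congr_fun measurableSet_Ioi (fun x hx ↦ ?_)
    rw [norm_mul, norm_eq_abs, norm_of_nonneg (by have := hx.out.le; positivity)]
  calc ∫ x in Ioi (0 : ℝ), (∑' k, a k * x ^ k) * exp (-x)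
      = ∫ x in Ioi (0 : ℝ), ∑' k, a k * (x ^ k * exp (-x)) := by
        simp_rw [← tsum_mul_right, mul_assoc]
    _ = ∑' k, ∫ x in Ioi (0 : ℝ), a k * (x ^ k * exp (-x)) :=
        (integral_tsum_of_summable_integral_norm h_int (by simpa only [h_norm] using ha)).symm
    _ = ∑' k, a k * k ! := by simp_rw [integral_const_mul, integral_pow_mul_exp_neg_Ioi]

lemma pow_div_factorial_sq_mul_factorial (c : ℝ) (k : ℕ) :
    c ^ k / (k ! : ℝ) ^ 2 * k ! = c ^ k / k ! := by
  field_simp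

lemma summable_abs_pow_div_factorial_sq_mul_factorial (c : ℝ) :
    Summable fun k ↦ |c ^ k / (k ! : ℝ) ^ 2| * k ! := by
  simpa only [abs_div, abs_pow, Nat.abs_cast, pow_div_factorial_sq_mul_factorial]
    using summable_pow_div_factorial |c|

lemma tsum_pow_div_factorial_sq_mul_factorial (c : ℝ) :
    ∑' k, c ^ k / (k ! : ℝ) ^ 2 * k ! = exp c := by
  simp_rw [pow_div_factorial_sq_mul_factorial, exp_eq_exp_ℝ, NormedSpace.exp_eq_tsum_div]

theorem chi_sq_comparison_double_integral_general (τ : ℝ) :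
    ∫ x₂ in Set.Ioi (0 : ℝ),
        (∫ x₁ in Set.Ioi x₂, (1 / 2) * Real.exp (-x₁ / 2)) *
          ((1 / 2) * Real.exp (-(x₂ + τ) / 2) *
            (∑' k : ℕ, (τ * x₂ / 4) ^ k / ((Nat.factorial k : ℝ)) ^ 2))
      = (1 / 2) * Real.exp (-τ / 4) := by
  have h_integrand (x : ℝ) :
      exp (-x / 2) * ((1 / 2) * exp (-(x + τ) / 2) * ∑' k, (τ * x / 4) ^ k / (k ! : ℝ) ^ 2)
        = 1 / 2 * exp (-τ / 2) *
            ((∑' k, (τ / 4) ^ k / (k ! : ℝ) ^ 2 * x ^ k) * exp (-x)) := by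
    have h_exp : exp (-x / 2) * exp (-(x + τ) / 2) = exp (-τ / 2) * exp (-x) := by
      rw [← exp_add, ← exp_add]
      ring_nf
    simp_rw [mul_div_right_comm τ x, mul_pow, div_mul_eq_mul_div]
    linear_combination (1 / 2 * ∑' k, (τ / 4) ^ k * x ^ k / (k ! : ℝ) ^ 2) * h_exp
  simp_rw [integral_half_mul_exp_neg_half_Ioi, h_integrand]
  rw [integral_const_mul, integral_tsum_mul_pow_mul_exp_neg_Ioi _
    (summable_abs_pow_div_factorial_sq_mul_factorial _),
    tsum_pow_div_factorial_sq_mul_factorial, mul_assoc, ← exp_add]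
  ring_nf

/-- Eq. (23) of the paper: for every `τ ≥ 0`, the double integral
`∫_0^∞ (∫_{x₂}^∞ (1/2)·exp(−x₁/2) dx₁) · (1/2)·exp(−(x₂+τ)/2)·(∑_{k=0}^∞ (τx₂/4)^k/(k!)²) dx₂`
equals `(1/2)·exp(−τ/4)`. -/
theorem chi_sq_comparison_double_integral (τ : ℝ) (hτ : 0 ≤ τ) :
    ∫ x₂ in Set.Ioi (0 : ℝ),
        (∫ x₁ in Set.Ioi x₂, (1 / 2) * Real.exp (-x₁ / 2)) *
          ((1 / 2) * Real.exp (-(x₂ + τ) / 2) *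
            (∑' k : ℕ, (τ * x₂ / 4) ^ k / ((Nat.factorial k : ℝ)) ^ 2))
      = (1 / 2) * Real.exp (-τ / 4) :=
  chi_sq_comparison_double_integral_general τ
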